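/- arXiv:2208.10025 — 3 statements merged into one kernel-verified Lean document; each statement's English description precedes it below -/
import Mathlib

section
/- Let f : ℝ^d → ℝ be L-smooth, h : ℝ^d → ℝ convex, Φ = f + h, and η ∈ (0, 1/L]. Given a point x and any vector v ∈ ℝ^d, define x⁺ := prox_{ηh}(x - ηv) and the gradient mapping G_η(x) := (1/η)(x - prox_{ηh}(x - η∇f(x))). Then Φ(x⁺) ≤ Φ(x) - (η/2)‖G_η(x)‖² - (1/(2η) - L/2)‖x⁺ - x‖² + (η/2)‖v - ∇f(x)‖². -/
/-!
Three inequalities are added up: the descent lemma bounds `f x⁺` by its linearization at `x`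
plus `(L/2)‖x⁺ - x‖²`, and the optimality of the two proximal points (tested against `p` and
against `x`) bounds `h x⁺ - h x`. What remains is `⟪∇f(x) - v, x⁺ - p⟫` minus quadratic terms,
and Young's inequality trades it for `(η/2)‖v - ∇f(x)‖²`.
-/

open scoped RealInnerProductSpace
open Set Filter Topology

variable {E : Type*} [NormedAddCommGroup E] [InnerProductSpace ℝ E]

theorem le_add_inner_add_sq_of_lipschitz_gradient [CompleteSpace E] {f : E → ℝ} {g : E → E}
    {L : ℝ} (hgrad : ∀ x, HasGradientAt f (g x) x) (hlip : ∀ x y, ‖g x - g y‖ ≤ L * ‖x - y‖)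
    (x y : E) : f y ≤ f x + ⟪g x, y - x⟫ + L / 2 * ‖y - x‖ ^ 2 := by
  set z := y - x
  -- the quadratic upper model minus `f` along the segment; its derivative has the sign of
  -- `⟪g (x + t • z) - g x, z⟫ - L t ‖z‖²`, which Lipschitz continuity makes `≤ 0` for `t ≥ 0`
  let φ : ℝ → ℝ := fun t => f (x + t • z) - t * ⟪g x, z⟫ - L / 2 * t ^ 2 * ‖z‖ ^ 2
  have hφ : ∀ t, HasDerivAt φ (⟪g (x + t • z) - g x, z⟫ - L * t * ‖z‖ ^ 2) t := by
    intro t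
    have hline : HasDerivAt (fun s : ℝ => x + s • z) z t := by
      simpa using ((hasDerivAt_id t).smul_const z).const_add x
    have hf : HasDerivAt (fun s : ℝ => f (x + s • z)) ⟪g (x + t • z), z⟫ t := by
      simpa [Function.comp_def] using (hgrad (x + t • z)).hasFDerivAt.comp_hasDerivAt t hline
    refine ((hf.sub ((hasDerivAt_id t).mul_const ⟪g x, z⟫)).sub
      (((hasDerivAt_pow 2 t).const_mul (L / 2)).mul_const (‖z‖ ^ 2))).congr_deriv ?_
    simp only [inner_sub_left, one_mul, Nat.cast_ofNat, pow_one, Nat.add_one_sub_one]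
    ring
  have hφ' : ∀ t ∈ interior (Ici (0:ℝ)), ⟪g (x + t • z) - g x, z⟫ - L * t * ‖z‖ ^ 2 ≤ 0 := by
    intro t ht
    rw [interior_Ici] at ht
    rw [sub_nonpos]
    calc ⟪g (x + t • z) - g x, z⟫ ≤ ‖g (x + t • z) - g x‖ * ‖z‖ := real_inner_le_norm _ _
      _ ≤ L * ‖t • z‖ * ‖z‖ := by gcongr; simpa using hlip (x + t • z) x
      _ = L * t * ‖z‖ ^ 2 := by rw [norm_smul, Real.norm_of_nonneg ht.le]; ring
  have hanti : AntitoneOn φ (Ici 0) :=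
    antitoneOn_of_hasDerivWithinAt_nonpos (convex_Ici 0)
      (fun t _ => (hφ t).continuousAt.continuousWithinAt) (fun t _ => (hφ t).hasDerivWithinAt) hφ'
  have h10 : φ 1 ≤ φ 0 := hanti (mem_Ici.2 le_rfl) (mem_Ici.2 zero_le_one) zero_le_one
  have hxz : x + z = y := add_sub_cancel x y
  simp only [φ, one_smul, zero_smul, add_zero, hxz, one_mul, one_pow, zero_mul, mul_one,
    sub_zero, zero_pow two_ne_zero, mul_zero] at h10
  linarith

theorem le_of_forall_mem_Ioo_le_add_mul {a b c : ℝ} (h : ∀ t ∈ Ioo (0:ℝ) 1, a ≤ b + t * c) :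
    a ≤ b := by
  have hlim : Tendsto (fun t : ℝ => b + t * c) (𝓝[>] 0) (𝓝 b) := by
    have : Tendsto (fun t : ℝ => b + t * c) (𝓝 0) (𝓝 (b + 0 * c)) :=
      (continuous_const.add (continuous_id.mul continuous_const)).tendsto 0
    simpa using this.mono_left nhdsWithin_le_nhds
  exact ge_of_tendsto hlim (eventually_of_mem (Ioo_mem_nhdsGT one_pos) h)

/-- `z = prox_{ηh}(u)`, stated through the minimizing property of `z`. -/
def IsProxPoint (h : E → ℝ) (η : ℝ) (u z : E) : Prop :=
  ∀ y, h z + (1 / (2 * η)) * ‖z - u‖ ^ 2 ≤ h y + (1 / (2 * η)) * ‖y - u‖ ^ 2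

theorem IsProxPoint.le_add_inner {h : E → ℝ} {η : ℝ} {u z : E} (hz : IsProxPoint h η u z)
    (hconv : ConvexOn ℝ univ h) (y : E) :
    h z ≤ h y + (1 / η) * ⟪z - u, y - z⟫ := by
  -- test the minimality of `z` at `z + t • (y - z)`, bound `h` there by convexity,
  -- divide by `t` and let `t → 0⁺`
  refine le_of_forall_mem_Ioo_le_add_mul (c := (1 / (2 * η)) * ‖y - z‖ ^ 2) fun t ⟨ht0, ht1⟩ => ?_
  have hconv_t : h (z + t • (y - z)) ≤ (1 - t) * h z + t * h y := by
    have := hconv.2 (mem_univ z) (mem_univ y) (sub_nonneg.2 ht1.le) ht0.le (by ring)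
    rwa [show (1 - t) • z + t • y = z + t • (y - z) by module] at this
  have hmin := hz (z + t • (y - z))
  have hexpand : ‖z + t • (y - z) - u‖ ^ 2 =
      ‖z - u‖ ^ 2 + 2 * t * ⟪z - u, y - z⟫ + t ^ 2 * ‖y - z‖ ^ 2 := by
    rw [show z + t • (y - z) - u = (z - u) + t • (y - z) by abel, norm_add_sq_real,
      real_inner_smul_right, norm_smul, Real.norm_of_nonneg ht0.le, mul_pow]
    ring
  rw [hexpand] at hmin
  have hscaled : t * h z ≤
      t * (h y + (1 / η) * ⟪z - u, y - z⟫ + t * ((1 / (2 * η)) * ‖y - z‖ ^ 2)) := by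
    linear_combination hmin + hconv_t
  exact le_of_mul_le_mul_left hscaled ht0

theorem inner_add_inner_add_inner_le {η : ℝ} (hη : 0 < η) (G v x x' p : E) :
    ⟪G, x' - x⟫ + (1 / η) * ⟪x' - (x - η • v), p - x'⟫ + (1 / η) * ⟪p - (x - η • G), x - p⟫ ≤
      (η / 2) * ‖v - G‖ ^ 2 - (1 / (2 * η)) * ‖x' - x‖ ^ 2 - (1 / (2 * η)) * ‖p - x‖ ^ 2 := by
  -- Young's inequality, with the gap written as a square
  have key : (η / 2) * ‖v - G‖ ^ 2 - (1 / (2 * η)) * ‖x' - x‖ ^ 2 - (1 / (2 * η)) * ‖p - x‖ ^ 2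
      - (⟪G, x' - x⟫ + (1 / η) * ⟪x' - (x - η • v), p - x'⟫ + (1 / η) * ⟪p - (x - η • G), x - p⟫)
      = (1 / (2 * η)) * ‖(x' - p) - η • (G - v)‖ ^ 2 := by
    simp only [← real_inner_self_eq_norm_sq, inner_sub_left, inner_sub_right,
      real_inner_smul_right, real_inner_comm]
    field_simp
    ring
  have : 0 ≤ (1 / (2 * η)) * ‖(x' - p) - η • (G - v)‖ ^ 2 := by positivity
  linarith

theorem stmt1_general {d : ℕ} (f h : EuclideanSpace ℝ (Fin d) → ℝ)
    (g : EuclideanSpace ℝ (Fin d) → EuclideanSpace ℝ (Fin d)) (L η : ℝ)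
    (hη1 : 0 < η)
    (hgrad : ∀ x, HasGradientAt f (g x) x)
    (hsmooth : ∀ x y, ‖g x - g y‖ ≤ L * ‖x - y‖)
    (hconv : ConvexOn ℝ Set.univ h)
    (x v xplus p : EuclideanSpace ℝ (Fin d))
    (hxplus : ∀ y, h xplus + (1 / (2 * η)) * ‖xplus - (x - η • v)‖ ^ 2 ≤
      h y + (1 / (2 * η)) * ‖y - (x - η • v)‖ ^ 2)
    (hp : ∀ y, h p + (1 / (2 * η)) * ‖p - (x - η • g x)‖ ^ 2 ≤
      h y + (1 / (2 * η)) * ‖y - (x - η • g x)‖ ^ 2) :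
    f xplus + h xplus ≤ f x + h x - (η / 2) * ‖(1 / η) • (x - p)‖ ^ 2
      - (1 / (2 * η) - L / 2) * ‖xplus - x‖ ^ 2 + (η / 2) * ‖v - g x‖ ^ 2 := by
  have hf := le_add_inner_add_sq_of_lipschitz_gradient hgrad hsmooth x xplus
  have hh_xplus := IsProxPoint.le_add_inner hxplus hconv p
  have hh_p := IsProxPoint.le_add_inner hp hconv x
  have hyoung := inner_add_inner_add_inner_le hη1 (g x) v x xplus p
  have hG : (η / 2) * ‖(1 / η) • (x - p)‖ ^ 2 = (1 / (2 * η)) * ‖p - x‖ ^ 2 := by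
    rw [norm_smul, norm_sub_rev, Real.norm_of_nonneg (by positivity)]
    field_simp
  rw [hG]
  linarith

/-- Key proximal descent inequality: for `L`-smooth `f`, convex `h`, `Φ = f + h`,
`η ∈ (0, 1/L]`, `x⁺ = prox_{ηh}(x - ηv)` and gradient mapping
`G_η(x) = (1/η)(x - prox_{ηh}(x - η∇f(x)))`,
`Φ(x⁺) ≤ Φ(x) - (η/2)‖G_η(x)‖² - (1/(2η) - L/2)‖x⁺-x‖² + (η/2)‖v - ∇f(x)‖²`. -/
theorem stmt1 {d : ℕ} (f h : EuclideanSpace ℝ (Fin d) → ℝ)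
    (g : EuclideanSpace ℝ (Fin d) → EuclideanSpace ℝ (Fin d)) (L η : ℝ)
    (hL : 0 < L) (hη1 : 0 < η) (hη2 : η ≤ 1 / L)
    (hgrad : ∀ x, HasGradientAt f (g x) x)
    (hsmooth : ∀ x y, ‖g x - g y‖ ≤ L * ‖x - y‖)
    (hconv : ConvexOn ℝ Set.univ h)
    (x v xplus p : EuclideanSpace ℝ (Fin d))
    (hxplus : ∀ y, h xplus + (1 / (2 * η)) * ‖xplus - (x - η • v)‖ ^ 2 ≤
      h y + (1 / (2 * η)) * ‖y - (x - η • v)‖ ^ 2)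
    (hp : ∀ y, h p + (1 / (2 * η)) * ‖p - (x - η • g x)‖ ^ 2 ≤
      h y + (1 / (2 * η)) * ‖y - (x - η • g x)‖ ^ 2) :
    f xplus + h xplus ≤ f x + h x - (η / 2) * ‖(1 / η) • (x - p)‖ ^ 2
      - (1 / (2 * η) - L / 2) * ‖xplus - x‖ ^ 2 + (η / 2) * ‖v - g x‖ ^ 2 :=
  stmt1_general f h g L η hη1 hgrad hsmooth hconv x v xplus p hxplus hp
end

section
/- Let f(x) = (1/n) ∑_{i=1}^n f_i(x) where the family {f_i} is average L-smooth. Let x, y be fixed points, and let v := (1/b) ∑_{i ∈ I_b} (∇f_i(x) - ∇f_i(y)) + g, where I_b is a multiset of b indices sampled independently and uniformly at random from {1,...,n}, and g is a fixed vector. Then E‖v - ∇f(x)‖² ≤ (L²/b)‖x - y‖² + ‖g - ∇f(y)‖². -/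
/-!
Write `a i = ∇fᵢ(x) - ∇fᵢ(y)` and centre it, `c i = a i - (1/n) ∑ a`. The error `v - ∇f(x)` is
then the minibatch mean of the `c (s j)` plus the deterministic vector `g - ∇f(y)`. The
`c (s j)` are independent with mean zero, so all cross terms average out and the second moment
is `(1/b) (1/n) ∑ ‖c i‖² + ‖g - ∇f(y)‖²`. Centring only lowers the second moment, so
`(1/n) ∑ ‖c i‖² ≤ (1/n) ∑ ‖a i‖² ≤ L² ‖x - y‖²`.
-/

open Finset

theorem Fintype.sum_pi_fin_succ {ι M : Type*} [Fintype ι] [AddCommMonoid M] {b : ℕ}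
    (F : (Fin (b + 1) → ι) → M) :
    ∑ s, F s = ∑ i, ∑ t : Fin b → ι, F (Fin.cons i t) := by
  rw [← (Fin.consEquiv fun _ => ι).sum_comp, Fintype.sum_prod_type]
  rfl

section

variable {ι : Type*} [Fintype ι]

theorem sum_pi_sum_apply_eq_zero {M : Type*} [AddCommMonoid M] {c : ι → M}
    (hc : ∑ i, c i = 0) (b : ℕ) : ∑ s : Fin b → ι, ∑ j, c (s j) = 0 := by
  induction b with
  | zero => simp
  | succ b ih =>
    simp only [Fintype.sum_pi_fin_succ, Fin.sum_univ_succ, Fin.cons_zero, Fin.cons_succ,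
      sum_add_distrib, sum_const, card_univ, ih, smul_zero, add_zero, ← smul_sum, hc]

theorem sum_sub_average_eq_zero {M : Type*} [AddCommGroup M] [Module ℝ M] (a : ι → M) :
    ∑ i, (a i - (Fintype.card ι : ℝ)⁻¹ • ∑ j, a j) = 0 := by
  rcases isEmpty_or_nonempty ι with _ | _
  · simp
  rw [sum_sub_distrib, sum_const, card_univ, ← Nat.cast_smul_eq_nsmul ℝ, smul_smul,
    mul_inv_cancel₀ (by simp), one_smul, sub_self]

variable {E σ : Type*} [NormedAddCommGroup E] [InnerProductSpace ℝ E] [Fintype σ]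

theorem sum_norm_add_sq_of_sum_eq_zero {Z : σ → E} (hZ : ∑ s, Z s = 0) (D : E) :
    ∑ s, ‖Z s + D‖ ^ 2 = ∑ s, ‖Z s‖ ^ 2 + Fintype.card σ * ‖D‖ ^ 2 := by
  have hcross : ∑ s, inner ℝ (Z s) D = 0 := by rw [← sum_inner, hZ, inner_zero_left]
  simp only [norm_add_sq_real, sum_add_distrib, ← mul_sum, hcross, sum_const, card_univ,
    nsmul_eq_mul]
  ring

theorem sum_norm_sub_average_sq_le (a : ι → E) :
    ∑ i, ‖a i - (Fintype.card ι : ℝ)⁻¹ • ∑ j, a j‖ ^ 2 ≤ ∑ i, ‖a i‖ ^ 2 := by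
  set m := (Fintype.card ι : ℝ)⁻¹ • ∑ j, a j
  have hsum : ∑ i, inner ℝ (a i) m = Fintype.card ι * ‖m‖ ^ 2 := by
    rcases isEmpty_or_nonempty ι with _ | _
    · simp
    rw [← sum_inner, ← real_inner_self_eq_norm_sq, ← real_inner_smul_left, smul_smul,
      mul_inv_cancel₀ (by simp), one_smul]
  have : 0 ≤ (Fintype.card ι : ℝ) * ‖m‖ ^ 2 := by positivity
  simp only [norm_sub_sq_real, sum_add_distrib, sum_sub_distrib, ← mul_sum, hsum, sum_const,
    card_univ, nsmul_eq_mul]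
  linarith

theorem average_norm_sum_pi_sq {c : ι → E} (hc : ∑ i, c i = 0) (b : ℕ) :
    ((Fintype.card ι : ℝ) ^ b)⁻¹ * ∑ s : Fin b → ι, ‖∑ j, c (s j)‖ ^ 2
      = b * ((Fintype.card ι : ℝ)⁻¹ * ∑ i, ‖c i‖ ^ 2) := by
  induction b with
  | zero => simp
  | succ b ih =>
    rcases eq_or_ne (Fintype.card ι : ℝ) 0 with hn | hn
    · simp [hn]
    have hstep : ∑ s : Fin (b + 1) → ι, ‖∑ j, c (s j)‖ ^ 2
        = (Fintype.card ι : ℝ) ^ b * ∑ i, ‖c i‖ ^ 2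
          + Fintype.card ι * ∑ t : Fin b → ι, ‖∑ j, c (t j)‖ ^ 2 := by
      simp only [Fintype.sum_pi_fin_succ, Fin.sum_univ_succ, Fin.cons_zero, Fin.cons_succ]
      rw [sum_comm]
      simp only [sum_norm_add_sq_of_sum_eq_zero hc, sum_add_distrib, sum_const, card_univ,
        Fintype.card_fun, Fintype.card_fin, nsmul_eq_mul, ← mul_sum]
      push_cast
      ring
    have ih' : ∑ t : Fin b → ι, ‖∑ j, c (t j)‖ ^ 2
        = (Fintype.card ι : ℝ) ^ b * (b * ((Fintype.card ι : ℝ)⁻¹ * ∑ i, ‖c i‖ ^ 2)) := by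
      rw [← ih, mul_inv_cancel_left₀ (pow_ne_zero b hn)]
    rw [hstep, ih']
    field_simp
    push_cast
    ring

theorem average_norm_minibatch_add_sq [Nonempty ι] {c : ι → E} (hc : ∑ i, c i = 0) (b : ℕ)
    (D : E) :
    ((Fintype.card ι : ℝ) ^ b)⁻¹ * ∑ s : Fin b → ι, ‖(b : ℝ)⁻¹ • ∑ j, c (s j) + D‖ ^ 2
      = (b : ℝ)⁻¹ * ((Fintype.card ι : ℝ)⁻¹ * ∑ i, ‖c i‖ ^ 2) + ‖D‖ ^ 2 := by
  have hmean : ∑ s : Fin b → ι, (b : ℝ)⁻¹ • ∑ j, c (s j) = 0 := by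
    rw [← smul_sum, sum_pi_sum_apply_eq_zero hc, smul_zero]
  rw [sum_norm_add_sq_of_sum_eq_zero hmean]
  simp only [norm_smul, mul_pow, ← mul_sum, Real.norm_eq_abs, sq_abs, Fintype.card_fun,
    Fintype.card_fin]
  rw [mul_add, mul_left_comm, average_norm_sum_pi_sq hc, Nat.cast_pow,
    inv_mul_cancel_left₀ (pow_ne_zero b (by simp))]
  rcases eq_or_ne (b : ℝ) 0 with hb | hb
  · simp [hb]
  · field_simp

end

theorem stmt2_general {d n b : ℕ} (hn : 0 < n) (hb : 0 < b)
    (gi : Fin n → EuclideanSpace ℝ (Fin d) → EuclideanSpace ℝ (Fin d))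
    (L : ℝ)
    (havg : ∀ x y : EuclideanSpace ℝ (Fin d),
      (n : ℝ)⁻¹ * ∑ i, ‖gi i x - gi i y‖ ^ 2 ≤ L ^ 2 * ‖x - y‖ ^ 2)
    (x y g : EuclideanSpace ℝ (Fin d)) :
    ((n : ℝ) ^ b)⁻¹ *
      ∑ s : Fin b → Fin n,
        ‖(b : ℝ)⁻¹ • (∑ j, (gi (s j) x - gi (s j) y)) + g
          - (n : ℝ)⁻¹ • ∑ i, gi i x‖ ^ 2
      ≤ L ^ 2 / b * ‖x - y‖ ^ 2 + ‖g - (n : ℝ)⁻¹ • ∑ i, gi i y‖ ^ 2 := by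
  have : NeZero n := ⟨hn.ne'⟩
  set a := fun i => gi i x - gi i y
  set c := fun i => a i - (n : ℝ)⁻¹ • ∑ j, a j
  have hc : ∑ i, c i = 0 := by simpa only [Fintype.card_fin] using sum_sub_average_eq_zero a
  have hsummand : ∀ s : Fin b → Fin n,
      (b : ℝ)⁻¹ • (∑ j, (gi (s j) x - gi (s j) y)) + g - (n : ℝ)⁻¹ • ∑ i, gi i x
        = (b : ℝ)⁻¹ • (∑ j, c (s j)) + (g - (n : ℝ)⁻¹ • ∑ i, gi i y) := by
    intro s
    have hb' : (b : ℝ) ≠ 0 := by positivity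
    simp only [c, a, sum_sub_distrib, sum_const, card_univ, Fintype.card_fin, smul_sub,
      ← Nat.cast_smul_eq_nsmul ℝ, smul_smul, inv_mul_cancel_left₀ hb']
    abel
  have hvar : (n : ℝ)⁻¹ * ∑ i, ‖c i‖ ^ 2 ≤ L ^ 2 * ‖x - y‖ ^ 2 :=
    (mul_le_mul_of_nonneg_left (by simpa using sum_norm_sub_average_sq_le a)
      (by positivity)).trans (havg x y)
  have hmoment := average_norm_minibatch_add_sq hc b (g - (n : ℝ)⁻¹ • ∑ i, gi i y)
  rw [Fintype.card_fin] at hmoment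
  simp only [hsummand, hmoment, div_eq_inv_mul, mul_assoc]
  gcongr

/-- Variance bound for the SVRG estimator: with average `L`-smoothness,
`E‖v - ∇f(x)‖² ≤ (L²/b)‖x-y‖² + ‖g - ∇f(y)‖²`, the expectation taken over a
minibatch of `b` indices sampled independently and uniformly from `{1,…,n}`. -/
theorem stmt2 {d n b : ℕ} (hn : 0 < n) (hb : 0 < b)
    (fi : Fin n → EuclideanSpace ℝ (Fin d) → ℝ)
    (gi : Fin n → EuclideanSpace ℝ (Fin d) → EuclideanSpace ℝ (Fin d))
    (L : ℝ)
    (hgrad : ∀ i x, HasGradientAt (fi i) (gi i x) x)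
    (havg : ∀ x y : EuclideanSpace ℝ (Fin d),
      (n : ℝ)⁻¹ * ∑ i, ‖gi i x - gi i y‖ ^ 2 ≤ L ^ 2 * ‖x - y‖ ^ 2)
    (x y g : EuclideanSpace ℝ (Fin d)) :
    ((n : ℝ) ^ b)⁻¹ *
      ∑ s : Fin b → Fin n,
        ‖(b : ℝ)⁻¹ • (∑ j, (gi (s j) x - gi (s j) y)) + g
          - (n : ℝ)⁻¹ • ∑ i, gi i x‖ ^ 2
      ≤ L ^ 2 / b * ‖x - y‖ ^ 2 + ‖g - (n : ℝ)⁻¹ • ∑ i, gi i y‖ ^ 2 :=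
  stmt2_general hn hb gi L havg x y g
end

section
/- Let f(x) = x² + 3 sin²(x) on ℝ. Then f is not convex, but f satisfies the Polyak-Łojasiewicz condition (f'(x))² ≥ 2μ(f(x) - f*) with μ = 1/32, where f* = 0 is the global minimum value of f. -/
/-! Since `sin² x ≤ x²`, the function is squeezed by `x² ≤ f x ≤ 4x²`, so the PL inequality with
`μ = 1/32` reduces to `|f' x| ≥ |x|/2`. As `f'` is odd it suffices to take `x ≥ 0`: on `[0, π/2]`
the term `3 sin 2x` is nonnegative, on `[π/2, 2]` it is at least `3(π - 2x)` (from `sin y ≤ y`),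
and beyond `2` the linear term `2x` dominates. Nonconvexity is seen at the midpoint of `0` and `π`,
where `f(π/2) = π²/4 + 3` exceeds `(f 0 + f π)/2 = π²/2` because `π² < 12`. -/

open Real

lemma hasDerivAt_sq_add_three_mul_sin_sq (x : ℝ) :
    HasDerivAt (fun x : ℝ => x ^ 2 + 3 * sin x ^ 2) (2 * x + 3 * sin (2 * x)) x := by
  refine ((hasDerivAt_pow 2 x).add (((hasDerivAt_sin x).pow 2).const_mul 3)).congr_deriv ?_
  rw [sin_two_mul]
  ring

lemma not_convexOn_sq_add_three_mul_sin_sq :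
    ¬ ConvexOn ℝ Set.univ (fun x : ℝ => x ^ 2 + 3 * sin x ^ 2) := by
  intro hconv
  have hmid := hconv.2 (Set.mem_univ 0) (Set.mem_univ π)
    (by norm_num : (0 : ℝ) ≤ 1 / 2) (by norm_num : (0 : ℝ) ≤ 1 / 2) (by norm_num)
  have hhalf : (1 / 2 : ℝ) * π = π / 2 := by ring
  simp only [smul_eq_mul, mul_zero, zero_add, hhalf, sin_pi_div_two, sin_zero, sin_pi] at hmid
  nlinarith [pi_lt_d2, pi_gt_three]

lemma half_le_two_mul_add_three_mul_sin_two_mul {x : ℝ} (hx : 0 ≤ x) :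
    x / 2 ≤ 2 * x + 3 * sin (2 * x) := by
  rcases le_or_gt x (π / 2) with hx₁ | hx₁
  · have := sin_nonneg_of_nonneg_of_le_pi (by linarith : 0 ≤ 2 * x) (by linarith)
    linarith
  rcases le_or_gt x 2 with hx₂ | hx₂
  · have hle : sin (2 * x - π) ≤ 2 * x - π := sin_le (by linarith)
    rw [sin_sub_pi] at hle
    linarith [pi_gt_d2]
  · linarith [neg_one_le_sin (2 * x)]

lemma half_abs_le_abs_two_mul_add_three_mul_sin_two_mul (x : ℝ) :
    |x| / 2 ≤ |2 * x + 3 * sin (2 * x)| := by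
  rcases le_total 0 x with hx | hx
  · rw [abs_of_nonneg hx]
    exact (half_le_two_mul_add_three_mul_sin_two_mul hx).trans (le_abs_self _)
  · have h := half_le_two_mul_add_three_mul_sin_two_mul (neg_nonneg.mpr hx)
    rw [mul_neg, sin_neg] at h
    rw [abs_of_nonpos hx]
    linarith [neg_abs_le (2 * x + 3 * sin (2 * x))]

/-- `f(x) = x² + 3 sin² x` is nonconvex but satisfies the PL condition
`(f'(x))² ≥ 2μ (f(x) - f*)` with `μ = 1/32` and `f* = 0 = f(0)` the global minimum. -/
theorem stmt6 :
    ¬ ConvexOn ℝ Set.univ (fun x : ℝ => x ^ 2 + 3 * Real.sin x ^ 2) ∧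
    (fun x : ℝ => x ^ 2 + 3 * Real.sin x ^ 2) 0 = 0 ∧
    (∀ x : ℝ, 0 ≤ x ^ 2 + 3 * Real.sin x ^ 2) ∧
    (∀ x : ℝ, (deriv (fun x : ℝ => x ^ 2 + 3 * Real.sin x ^ 2) x) ^ 2 ≥
      2 * (1 / 32) * ((x ^ 2 + 3 * Real.sin x ^ 2) - 0)) := by
  refine ⟨not_convexOn_sq_add_three_mul_sin_sq, by simp, fun x => by positivity, fun x => ?_⟩
  rw [(hasDerivAt_sq_add_three_mul_sin_sq x).deriv]
  have hsin : sin x ^ 2 ≤ x ^ 2 := sin_sq_le_sq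
  have hderiv : (|x| / 2) ^ 2 ≤ (2 * x + 3 * sin (2 * x)) ^ 2 := by
    simpa only [sq_abs] using
      pow_le_pow_left₀ (by positivity) (half_abs_le_abs_two_mul_add_three_mul_sin_two_mul x) 2
  rw [div_pow, sq_abs] at hderiv
  linarith
end
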